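/- arXiv:2505.00202 — 8 statements merged into one kernel-verified Lean document; each statement's English description precedes it below -/
import Mathlib

section
/- Let G be a (claw, 4K₁)-free graph containing an induced 7-cycle H with vertices 1,…,7 (indices mod 7). Then every vertex of G not on H is adjacent to either exactly 3 consecutive vertices of H, exactly 4 consecutive vertices of H, or exactly the 4 vertices i, i+1, i+3, i+4 for some i. -/
set_option synthInstance.maxSize 2000
set_option synthInstance.maxHeartbeats 1000000
set_option maxHeartbeats 4000000
set_option maxRecDepth 100000

variable {V : Type*}

/-- `c` lists the vertices of an induced cycle of length `n` in `G`, in cyclic order. -/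
def IsInducedCycle {n : ℕ} (G : SimpleGraph V) (c : ZMod n → V) : Prop :=
  Function.Injective c ∧ ∀ i j : ZMod n, G.Adj (c i) (c j) ↔ i = j + 1 ∨ j = i + 1

/-- `G` has no induced `K₁,₃`. -/
def ClawFree (G : SimpleGraph V) : Prop :=
  ¬ ∃ x a b c : V, G.Adj x a ∧ G.Adj x b ∧ G.Adj x c ∧
    ¬ G.Adj a b ∧ ¬ G.Adj a c ∧ ¬ G.Adj b c ∧ a ≠ b ∧ a ≠ c ∧ b ≠ c

/-- `G` has no independent set of four vertices (no induced `4K₁`). -/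
def FourK1Free (G : SimpleGraph V) : Prop :=
  ¬ ∃ a b c d : V, a ≠ b ∧ a ≠ c ∧ a ≠ d ∧ b ≠ c ∧ b ≠ d ∧ c ≠ d ∧
    ¬ G.Adj a b ∧ ¬ G.Adj a c ∧ ¬ G.Adj a d ∧
    ¬ G.Adj b c ∧ ¬ G.Adj b d ∧ ¬ G.Adj c d

lemma c7_key (f : ZMod 7 → Bool)
    (hA : ∀ i j k : ZMod 7, f i → f j → f k →
      i = j ∨ i = k ∨ j = k ∨ i = j + 1 ∨ j = i + 1 ∨ i = k + 1 ∨ k = i + 1 ∨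
      j = k + 1 ∨ k = j + 1)
    (hB : ∀ i j k : ZMod 7, i ≠ j → i ≠ k → j ≠ k →
      ¬(i = j + 1 ∨ j = i + 1) → ¬(i = k + 1 ∨ k = i + 1) → ¬(j = k + 1 ∨ k = j + 1) →
      f i ∨ f j ∨ f k)
    (hC : ∀ i : ZMod 7, f i → f (i + 1) ∨ f (i + 6)) :
    (∃ i : ZMod 7, ∀ j, f j ↔ (j = i ∨ j = i + 1 ∨ j = i + 2)) ∨
    (∃ i : ZMod 7, ∀ j, f j ↔ (j = i ∨ j = i + 1 ∨ j = i + 2 ∨ j = i + 3)) ∨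
    (∃ i : ZMod 7, ∀ j, f j ↔ (j = i ∨ j = i + 1 ∨ j = i + 3 ∨ j = i + 4)) := by
  revert hA hB hC
  revert f
  decide

/-- In a `(claw, 4K₁)`-free graph with an induced `C₇`, every vertex outside the
cycle sees, on the cycle, exactly `{i,i+1,i+2}`, `{i,i+1,i+2,i+3}`, or
`{i,i+1,i+3,i+4}` for some `i`. -/
theorem c7_vertex_partition (G : SimpleGraph V) (hclaw : ClawFree G)
    (h4 : FourK1Free G) (c : ZMod 7 → V) (hc : IsInducedCycle G c)
    (v : V) (hv : v ∉ Set.range c) :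
    (∃ i : ZMod 7, {j : ZMod 7 | G.Adj v (c j)} = {i, i + 1, i + 2}) ∨
    (∃ i : ZMod 7, {j : ZMod 7 | G.Adj v (c j)} = {i, i + 1, i + 2, i + 3}) ∨
    (∃ i : ZMod 7, {j : ZMod 7 | G.Adj v (c j)} = {i, i + 1, i + 3, i + 4}) := by
  classical
  obtain ⟨hinj, hadj⟩ := hc
  have hvc : ∀ j : ZMod 7, v ≠ c j := fun j h => hv ⟨j, h.symm⟩
  set f : ZMod 7 → Bool := fun j => decide (G.Adj v (c j)) with hf
  have hft : ∀ j, f j = true ↔ G.Adj v (c j) := fun j => decide_eq_true_iff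
  have hA : ∀ i j k : ZMod 7, f i → f j → f k →
      i = j ∨ i = k ∨ j = k ∨ i = j + 1 ∨ j = i + 1 ∨ i = k + 1 ∨ k = i + 1 ∨
      j = k + 1 ∨ k = j + 1 := by
    intro i j k hi hj hk
    by_contra hcon
    push_neg at hcon
    obtain ⟨h1, h2, h3, h4', h5, h6, h7, h8, h9⟩ := hcon
    exact hclaw ⟨v, c i, c j, c k, (hft i).1 hi, (hft j).1 hj, (hft k).1 hk,
      fun h => by rcases (hadj i j).1 h with h | h <;> [exact h4' h; exact h5 h],
      fun h => by rcases (hadj i k).1 h with h | h <;> [exact h6 h; exact h7 h],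
      fun h => by rcases (hadj j k).1 h with h | h <;> [exact h8 h; exact h9 h],
      fun h => h1 (hinj h), fun h => h2 (hinj h), fun h => h3 (hinj h)⟩
  have hB : ∀ i j k : ZMod 7, i ≠ j → i ≠ k → j ≠ k →
      ¬(i = j + 1 ∨ j = i + 1) → ¬(i = k + 1 ∨ k = i + 1) → ¬(j = k + 1 ∨ k = j + 1) →
      f i ∨ f j ∨ f k := by
    intro i j k h1 h2 h3 h4' h5 h6
    by_contra hcon
    push_neg at hcon
    obtain ⟨ni, nj, nk⟩ := hcon
    exact h4 ⟨v, c i, c j, c k, hvc i, hvc j, hvc k,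
      fun h => h1 (hinj h), fun h => h2 (hinj h), fun h => h3 (hinj h),
      fun h => ni ((hft i).2 h), fun h => nj ((hft j).2 h), fun h => nk ((hft k).2 h),
      fun h => h4' ((hadj i j).1 h), fun h => h5 ((hadj i k).1 h),
      fun h => h6 ((hadj j k).1 h)⟩
  have hC : ∀ i : ZMod 7, f i → f (i + 1) ∨ f (i + 6) := by
    intro i hi
    by_contra hcon
    push_neg at hcon
    obtain ⟨n1, n2⟩ := hcon
    have e70 : (6 : ZMod 7) + 1 = 0 := by decide
    have e7 : i + 6 + 1 = i := by rw [add_assoc, e70, add_zero]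
    refine hclaw ⟨c i, v, c (i + 1), c (i + 6),
      ((hft i).1 hi).symm, ?_, ?_, ?_, ?_, ?_, ?_, ?_, ?_⟩
    · exact (hadj i (i + 1)).2 (Or.inr rfl)
    · exact (hadj i (i + 6)).2 (Or.inl e7.symm)
    · exact fun h => n1 ((hft (i + 1)).2 h)
    · exact fun h => n2 ((hft (i + 6)).2 h)
    · intro h
      rcases (hadj (i + 1) (i + 6)).1 h with h | h
      · rw [e7] at h
        have : (1 : ZMod 7) = 0 := by
          have := h; nth_rewrite 2 [← add_zero i] at this
          exact add_left_cancel this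
        revert this; decide
      · rw [add_assoc] at h
        have : (6 : ZMod 7) = 1 + 1 := add_left_cancel h
        revert this; decide
    · exact hvc (i + 1)
    · exact hvc (i + 6)
    · intro h
      have : (1 : ZMod 7) = 6 := add_left_cancel (hinj h)
      revert this; decide
  rcases c7_key f hA hB hC with ⟨i, h⟩ | ⟨i, h⟩ | ⟨i, h⟩
  · exact Or.inl ⟨i, Set.ext fun j => by
      simpa [Set.mem_setOf_eq, ← hft j] using h j⟩
  · exact Or.inr (Or.inl ⟨i, Set.ext fun j => by
      simpa [Set.mem_setOf_eq, ← hft j] using h j⟩)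
  · exact Or.inr (Or.inr ⟨i, Set.ext fun j => by
      simpa [Set.mem_setOf_eq, ← hft j] using h j⟩)
end

section
/- Let G be a claw-free graph containing an induced 7-cycle H with vertices 1,…,7 (indices mod 7). If a ∈ X₁ (vertices outside H adjacent exactly to 1,2,3 on H) and b ∈ X₄ (vertices outside H adjacent exactly to 4,5,6 on H), then a and b are nonadjacent. In general Xᵢ and Xᵢ₊₃ form a co-join. -/
variable {V : Type*}

/-- In a claw-free graph with an induced `C₇`, the sets `Xᵢ` and `Xᵢ₊₃` form a
co-join: no vertex of `Xᵢ` is adjacent to a vertex of `Xᵢ₊₃`. -/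
theorem c7_Xi_Xi3_cojoin (G : SimpleGraph V) (hclaw : ClawFree G)
    (c : ZMod 7 → V) (hc : IsInducedCycle G c) (i : ZMod 7) (a b : V)
    (ha : a ∉ Set.range c) (hb : b ∉ Set.range c)
    (haX : {j : ZMod 7 | G.Adj a (c j)} = {i, i + 1, i + 2})
    (hbX : {j : ZMod 7 | G.Adj b (c j)} = {i + 3, i + 4, i + 5}) :
    ¬ G.Adj a b := by
  intro hab
  obtain ⟨hinj, hadj⟩ := hc
  have hA : ∀ j : ZMod 7, G.Adj a (c j) ↔ (j = i ∨ j = i + 1 ∨ j = i + 2) := by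
    intro j
    have : j ∈ {j : ZMod 7 | G.Adj a (c j)} ↔ j ∈ ({i, i + 1, i + 2} : Set (ZMod 7)) := by
      rw [haX]
    simpa [Set.mem_insert_iff] using this
  have hB : ∀ j : ZMod 7, G.Adj b (c j) ↔ (j = i + 3 ∨ j = i + 4 ∨ j = i + 5) := by
    intro j
    have : j ∈ {j : ZMod 7 | G.Adj b (c j)} ↔ j ∈ ({i + 3, i + 4, i + 5} : Set (ZMod 7)) := by
      rw [hbX]
    simpa [Set.mem_insert_iff] using this
  have key : ∀ d e : ZMod 7, i + d = i + e → d = e := fun d e h => add_left_cancel h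
  apply hclaw
  refine ⟨b, a, c (i + 3), c (i + 5), hab.symm, ?_, ?_, ?_, ?_, ?_, ?_, ?_, ?_⟩
  · exact (hB _).2 (Or.inl rfl)
  · exact (hB _).2 (Or.inr (Or.inr rfl))
  · intro h
    rcases (hA _).1 h with h' | h' | h'
    · exact absurd (key 3 0 (by rw [add_zero]; exact h')) (by decide)
    · exact absurd (key 3 1 h') (by decide)
    · exact absurd (key 3 2 h') (by decide)
  · intro h
    rcases (hA _).1 h with h' | h' | h'
    · exact absurd (key 5 0 (by rw [add_zero]; exact h')) (by decide)
    · exact absurd (key 5 1 h') (by decide)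
    · exact absurd (key 5 2 h') (by decide)
  · intro h
    rcases (hadj _ _).1 h with h' | h'
    · have : i + 3 = i + 6 := by rw [h']; ring
      exact absurd (key 3 6 this) (by decide)
    · have : i + 5 = i + 4 := by rw [h']; ring
      exact absurd (key 5 4 this) (by decide)
  · intro h; exact ha ⟨i + 3, h.symm⟩
  · intro h; exact ha ⟨i + 5, h.symm⟩
  · intro h
    exact absurd (key 3 5 (hinj h)) (by decide)
end

section
/- Let G be a 4K₁-free graph containing an induced 7-cycle H with vertices 1,…,7 (indices mod 7). Then any vertex in X₁ (adjacent exactly to 1,2,3 on H) is adjacent to every vertex in X₂ (adjacent exactly to 2,3,4 on H); i.e., Xᵢ and Xᵢ₊₁ form a join. -/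
variable {V : Type*}

/-- In a `4K₁`-free graph with an induced `C₇`, the sets `Xᵢ` and `Xᵢ₊₁` form a
join: every vertex of `Xᵢ` is adjacent to every vertex of `Xᵢ₊₁`. -/
theorem c7_Xi_Xi1_join (G : SimpleGraph V) (h4 : FourK1Free G)
    (c : ZMod 7 → V) (hc : IsInducedCycle G c) (i : ZMod 7) (a b : V)
    (ha : a ∉ Set.range c) (hb : b ∉ Set.range c)
    (haX : {j : ZMod 7 | G.Adj a (c j)} = {i, i + 1, i + 2})
    (hbX : {j : ZMod 7 | G.Adj b (c j)} = {i + 1, i + 2, i + 3}) :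
    G.Adj a b := by
  obtain ⟨hinj, hadj⟩ := hc
  have haj : ∀ j, G.Adj a (c j) ↔ j = i ∨ j = i + 1 ∨ j = i + 2 := by
    intro j
    have := Set.ext_iff.1 haX j
    simpa using this
  have hbj : ∀ j, G.Adj b (c j) ↔ j = i + 1 ∨ j = i + 2 ∨ j = i + 3 := by
    intro j
    have := Set.ext_iff.1 hbX j
    simpa using this
  by_contra hab
  apply h4
  refine ⟨a, b, c (i + 4), c (i + 6), ?_, ?_, ?_, ?_, ?_, ?_, hab, ?_, ?_, ?_, ?_, ?_⟩
  · rintro rfl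
    have h1 : G.Adj a (c i) := (haj i).2 (Or.inl rfl)
    have h2 := (hbj i).1 h1
    have h3 : ∀ k : ZMod 7, ¬(k = k + 1 ∨ k = k + 2 ∨ k = k + 3) := by decide
    exact h3 i h2
  · exact fun h => ha ⟨i + 4, h.symm⟩
  · exact fun h => ha ⟨i + 6, h.symm⟩
  · exact fun h => hb ⟨i + 4, h.symm⟩
  · exact fun h => hb ⟨i + 6, h.symm⟩
  · intro h
    have := hinj h
    have h3 : ∀ k : ZMod 7, k + 4 ≠ k + 6 := by decide
    exact h3 i this
  · intro h
    have := (haj _).1 h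
    have h3 : ∀ k : ZMod 7, ¬(k + 4 = k ∨ k + 4 = k + 1 ∨ k + 4 = k + 2) := by decide
    exact h3 i this
  · intro h
    have := (haj _).1 h
    have h3 : ∀ k : ZMod 7, ¬(k + 6 = k ∨ k + 6 = k + 1 ∨ k + 6 = k + 2) := by decide
    exact h3 i this
  · intro h
    have := (hbj _).1 h
    have h3 : ∀ k : ZMod 7, ¬(k + 4 = k + 1 ∨ k + 4 = k + 2 ∨ k + 4 = k + 3) := by decide
    exact h3 i this
  · intro h
    have := (hbj _).1 h
    have h3 : ∀ k : ZMod 7, ¬(k + 6 = k + 1 ∨ k + 6 = k + 2 ∨ k + 6 = k + 3) := by decide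
    exact h3 i this
  · intro h
    have := (hadj _ _).1 h
    have h3 : ∀ k : ZMod 7, ¬(k + 4 = k + 6 + 1 ∨ k + 6 = k + 4 + 1) := by decide
    exact h3 i this
end

section
/- Let G be a 4K₁-free graph containing an induced 7-cycle H with vertices 1,…,7 (indices mod 7). Then every vertex in Y₁ (adjacent on H exactly to 1,2,3,4) is adjacent to every vertex in X₁ (adjacent on H exactly to 1,2,3); i.e., Yᵢ ① Xᵢ for all i. -/
variable {V : Type*}

/-- In a `4K₁`-free graph with an induced `C₇`, `Yᵢ ① Xᵢ`: every vertex of `Yᵢ`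
is adjacent to every vertex of `Xᵢ`. -/
theorem c7_Yi_Xi_join (G : SimpleGraph V) (h4 : FourK1Free G)
    (c : ZMod 7 → V) (hc : IsInducedCycle G c) (i : ZMod 7) (a b : V)
    (ha : a ∉ Set.range c) (hb : b ∉ Set.range c)
    (haY : {j : ZMod 7 | G.Adj a (c j)} = {i, i + 1, i + 2, i + 3})
    (hbX : {j : ZMod 7 | G.Adj b (c j)} = {i, i + 1, i + 2}) :
    G.Adj a b := by
  obtain ⟨hinj, hadj⟩ := hc
  by_contra hab
  have hA : ∀ j, G.Adj a (c j) ↔ (j = i ∨ j = i + 1 ∨ j = i + 2 ∨ j = i + 3) := fun j => by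
    have := Set.ext_iff.mp haY j
    simpa [Set.mem_insert_iff] using this
  have hB : ∀ j, G.Adj b (c j) ↔ (j = i ∨ j = i + 1 ∨ j = i + 2) := fun j => by
    have := Set.ext_iff.mp hbX j
    simpa [Set.mem_insert_iff] using this
  apply h4
  refine ⟨a, b, c (i + 4), c (i + 6), ?_, ?_, ?_, ?_, ?_, ?_, hab, ?_, ?_, ?_, ?_, ?_⟩
  · intro h
    subst h
    have h1 : G.Adj a (c (i + 3)) := (hA _).mpr (by tauto)
    rcases (hB _).mp h1 with h | h | h
    · exact (by decide : (3:ZMod 7) ≠ 0) (by linear_combination h)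
    · exact (by decide : (3:ZMod 7) ≠ 1) (by linear_combination h)
    · exact (by decide : (3:ZMod 7) ≠ 2) (by linear_combination h)
  · exact fun h => ha ⟨_, h.symm⟩
  · exact fun h => ha ⟨_, h.symm⟩
  · exact fun h => hb ⟨_, h.symm⟩
  · exact fun h => hb ⟨_, h.symm⟩
  · intro h
    have h6 : (i + 4 : ZMod 7) = i + 6 := hinj h
    exact (by decide : (4:ZMod 7) ≠ 6) (by linear_combination h6)
  · intro h
    rcases (hA _).mp h with h | h | h | h
    · exact (by decide : (4:ZMod 7) ≠ 0) (by linear_combination h)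
    · exact (by decide : (4:ZMod 7) ≠ 1) (by linear_combination h)
    · exact (by decide : (4:ZMod 7) ≠ 2) (by linear_combination h)
    · exact (by decide : (4:ZMod 7) ≠ 3) (by linear_combination h)
  · intro h
    rcases (hA _).mp h with h | h | h | h
    · exact (by decide : (6:ZMod 7) ≠ 0) (by linear_combination h)
    · exact (by decide : (6:ZMod 7) ≠ 1) (by linear_combination h)
    · exact (by decide : (6:ZMod 7) ≠ 2) (by linear_combination h)
    · exact (by decide : (6:ZMod 7) ≠ 3) (by linear_combination h)
  · intro h
    rcases (hB _).mp h with h | h | h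
    · exact (by decide : (4:ZMod 7) ≠ 0) (by linear_combination h)
    · exact (by decide : (4:ZMod 7) ≠ 1) (by linear_combination h)
    · exact (by decide : (4:ZMod 7) ≠ 2) (by linear_combination h)
  · intro h
    rcases (hB _).mp h with h | h | h
    · exact (by decide : (6:ZMod 7) ≠ 0) (by linear_combination h)
    · exact (by decide : (6:ZMod 7) ≠ 1) (by linear_combination h)
    · exact (by decide : (6:ZMod 7) ≠ 2) (by linear_combination h)
  · intro h
    rcases (hadj _ _).mp h with h | h
    · exact (by decide : (4:ZMod 7) ≠ 7) (by linear_combination h)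
    · exact (by decide : (6:ZMod 7) ≠ 5) (by linear_combination h)
end

section
/- Let G be a claw-free graph containing an induced 7-cycle H with vertices 1,…,7 (indices mod 7). Then Y₁ (vertices adjacent on H exactly to 1,2,3,4) and X₄ (vertices adjacent on H exactly to 4,5,6) form a co-join: no vertex of Y₁ is adjacent to a vertex of X₄. -/
variable {V : Type*}

/-- In a claw-free graph with an induced `C₇`, `Yᵢ` and `Xᵢ₊₃` form a co-join
(in particular `Y₁` and `X₄`). -/
theorem c7_Yi_Xi3_cojoin (G : SimpleGraph V) (hclaw : ClawFree G)
    (c : ZMod 7 → V) (hc : IsInducedCycle G c) (i : ZMod 7) (a b : V)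
    (ha : a ∉ Set.range c) (hb : b ∉ Set.range c)
    (haY : {j : ZMod 7 | G.Adj a (c j)} = {i, i + 1, i + 2, i + 3})
    (hbX : {j : ZMod 7 | G.Adj b (c j)} = {i + 3, i + 4, i + 5}) :
    ¬ G.Adj a b := by
  intro hab
  have hadj : ∀ j : ZMod 7, G.Adj a (c j) ↔ (j = i ∨ j = i + 1 ∨ j = i + 2 ∨ j = i + 3) := by
    intro j
    have := Set.ext_iff.mp haY j
    simpa [Set.mem_insert_iff] using this
  have hbadj : ∀ j : ZMod 7, G.Adj b (c j) ↔ (j = i + 3 ∨ j = i + 4 ∨ j = i + 5) := by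
    intro j
    have := Set.ext_iff.mp hbX j
    simpa [Set.mem_insert_iff] using this
  apply hclaw
  refine ⟨a, b, c i, c (i + 2), hab, (hadj i).mpr (by tauto), (hadj (i+2)).mpr (by tauto),
    ?_, ?_, ?_, ?_, ?_, ?_⟩
  · intro h
    rcases (hbadj i).mp h with h | h | h <;>
    · have h' := congrArg (· - i) h
      ring_nf at h'
      exact absurd h' (by decide)
  · intro h
    rcases (hbadj (i+2)).mp h with h | h | h <;>
    · have h' := congrArg (· - i) h
      ring_nf at h'
      exact absurd h' (by decide)
  · intro h
    rcases (hc.2 i (i+2)).mp h with h | h <;>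
    · have h' := congrArg (· - i) h
      ring_nf at h'
      exact absurd h' (by decide)
  · exact fun h => hb ⟨i, h.symm⟩
  · exact fun h => hb ⟨i + 2, h.symm⟩
  · intro h
    have h2 := hc.1 h
    have h' := congrArg (· - i) h2
    ring_nf at h'
    exact absurd h' (by decide)
end

section
/- Let G be a (claw, 4K₁)-free graph containing an induced 6-cycle H with vertices 1,…,6 (indices mod 6). Then every vertex of G not on H is adjacent on H to either: two consecutive vertices {i,i+1}; three consecutive vertices {i,i+1,i+2}; four consecutive vertices {i,i+1,i+2,i+3}; or the four vertices {i,i+1,i+3,i+4} for some i. -/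
variable {V : Type*}

lemma c6_key : ∀ g : ZMod 6 → Bool,
    (∀ j, g j = true → g (j+1) = true ∨ g (j+5) = true) →
    (∀ j, ¬(g j = true ∧ g (j+2) = true ∧ g (j+4) = true)) →
    (g 0 = true ∨ g 2 = true ∨ g 4 = true) →
    (g 1 = true ∨ g 3 = true ∨ g 5 = true) →
    (∃ i : ZMod 6, ∀ j, g j = true ↔ (j = i ∨ j = i+1)) ∨
    (∃ i : ZMod 6, ∀ j, g j = true ↔ (j = i ∨ j = i+1 ∨ j = i+2)) ∨
    (∃ i : ZMod 6, ∀ j, g j = true ↔ (j = i ∨ j = i+1 ∨ j = i+2 ∨ j = i+3)) ∨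
    (∃ i : ZMod 6, ∀ j, g j = true ↔ (j = i ∨ j = i+1 ∨ j = i+3 ∨ j = i+4)) := by
  decide

/-- In a `(claw, 4K₁)`-free graph with an induced `C₆`, every vertex outside the
cycle sees, on the cycle, exactly `{i,i+1}`, `{i,i+1,i+2}`, `{i,i+1,i+2,i+3}`,
or `{i,i+1,i+3,i+4}` for some `i`. -/
theorem c6_vertex_partition (G : SimpleGraph V) (hclaw : ClawFree G)
    (h4 : FourK1Free G) (c : ZMod 6 → V) (hc : IsInducedCycle G c)
    (v : V) (hv : v ∉ Set.range c) :
    (∃ i : ZMod 6, {j : ZMod 6 | G.Adj v (c j)} = {i, i + 1}) ∨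
    (∃ i : ZMod 6, {j : ZMod 6 | G.Adj v (c j)} = {i, i + 1, i + 2}) ∨
    (∃ i : ZMod 6, {j : ZMod 6 | G.Adj v (c j)} = {i, i + 1, i + 2, i + 3}) ∨
    (∃ i : ZMod 6, {j : ZMod 6 | G.Adj v (c j)} = {i, i + 1, i + 3, i + 4}) := by
  classical
  obtain ⟨hinj, hadj⟩ := hc
  set g : ZMod 6 → Bool := fun j => decide (G.Adj v (c j)) with hg
  have hgiff : ∀ j, g j = true ↔ G.Adj v (c j) := fun j => decide_eq_true_iff
  have hvc : ∀ j, v ≠ c j := fun j h => hv ⟨j, h.symm⟩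
  have hadj2 : ∀ j a b : ZMod 6, G.Adj (c (j+a)) (c (j+b)) ↔ (a = b+1 ∨ b = a+1) := by
    intro j a b
    rw [hadj]
    simp only [add_assoc, add_right_inj]
  have hne : ∀ (j : ZMod 6) {a b : ZMod 6}, a ≠ b → c (j+a) ≠ c (j+b) :=
    fun j a b h e => h (add_left_cancel (hinj e))
  have h1 : ∀ j, g j = true → g (j+1) = true ∨ g (j+5) = true := by
    intro j hj
    by_contra hcon
    push_neg at hcon
    have na1 : ¬ G.Adj v (c (j+1)) := fun h => hcon.1 ((hgiff _).2 h)
    have na5 : ¬ G.Adj v (c (j+5)) := fun h => hcon.2 ((hgiff _).2 h)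
    apply hclaw
    refine ⟨c (j+0), v, c (j+1), c (j+5),
      by rw [add_zero]; exact ((hgiff j).1 hj).symm,
      (hadj2 j 0 1).2 (by decide), (hadj2 j 0 5).2 (by decide),
      na1, na5,
      fun h => absurd ((hadj2 j 1 5).1 h) (by decide),
      hvc _, hvc _, hne j (by decide)⟩
  have h2 : ∀ j, ¬(g j = true ∧ g (j+2) = true ∧ g (j+4) = true) := by
    rintro j ⟨ha, hb, hd⟩
    apply hclaw
    refine ⟨v, c (j+0), c (j+2), c (j+4),
      by rw [add_zero]; exact (hgiff j).1 ha,
      (hgiff _).1 hb, (hgiff _).1 hd,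
      fun h => absurd ((hadj2 j 0 2).1 h) (by decide),
      fun h => absurd ((hadj2 j 0 4).1 h) (by decide),
      fun h => absurd ((hadj2 j 2 4).1 h) (by decide),
      hne j (by decide), hne j (by decide), hne j (by decide)⟩
  have heven : g 0 = true ∨ g 2 = true ∨ g 4 = true := by
    by_contra hcon
    push_neg at hcon
    apply h4
    refine ⟨v, c 0, c 2, c 4, hvc _, hvc _, hvc _,
      fun e => absurd (hinj e) (by decide),
      fun e => absurd (hinj e) (by decide),
      fun e => absurd (hinj e) (by decide),
      fun h => hcon.1 ((hgiff _).2 h),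
      fun h => hcon.2.1 ((hgiff _).2 h),
      fun h => hcon.2.2 ((hgiff _).2 h),
      by rw [hadj]; decide, by rw [hadj]; decide, by rw [hadj]; decide⟩
  have hodd : g 1 = true ∨ g 3 = true ∨ g 5 = true := by
    by_contra hcon
    push_neg at hcon
    apply h4
    refine ⟨v, c 1, c 3, c 5, hvc _, hvc _, hvc _,
      fun e => absurd (hinj e) (by decide),
      fun e => absurd (hinj e) (by decide),
      fun e => absurd (hinj e) (by decide),
      fun h => hcon.1 ((hgiff _).2 h),
      fun h => hcon.2.1 ((hgiff _).2 h),
      fun h => hcon.2.2 ((hgiff _).2 h),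
      by rw [hadj]; decide, by rw [hadj]; decide, by rw [hadj]; decide⟩
  rcases c6_key g h1 h2 heven hodd with ⟨i, hi⟩ | ⟨i, hi⟩ | ⟨i, hi⟩ | ⟨i, hi⟩
  · refine Or.inl ⟨i, ?_⟩
    ext j
    simp only [Set.mem_setOf_eq, Set.mem_insert_iff, Set.mem_singleton_iff]
    rw [← hgiff j]; exact hi j
  · refine Or.inr (Or.inl ⟨i, ?_⟩)
    ext j
    simp only [Set.mem_setOf_eq, Set.mem_insert_iff, Set.mem_singleton_iff]
    rw [← hgiff j]; exact hi j
  · refine Or.inr (Or.inr (Or.inl ⟨i, ?_⟩))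
    ext j
    simp only [Set.mem_setOf_eq, Set.mem_insert_iff, Set.mem_singleton_iff]
    rw [← hgiff j]; exact hi j
  · refine Or.inr (Or.inr (Or.inr ⟨i, ?_⟩))
    ext j
    simp only [Set.mem_setOf_eq, Set.mem_insert_iff, Set.mem_singleton_iff]
    rw [← hgiff j]; exact hi j
end

section
/- Let G be a claw-free graph containing an induced 6-cycle H with vertices 1,…,6 (indices mod 6). If a vertex a ∈ T₁ is adjacent to a vertex b ∈ T₃ and to a vertex c ∈ T₅, then b and c are adjacent. -/
variable {V : Type*}

/-- In a claw-free graph with an induced `C₆`: if `a ∈ T₁` is adjacent to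
`b ∈ T₃` and to `x ∈ T₅`, then `b` and `x` are adjacent. -/
theorem c6_T1_T3_T5 (G : SimpleGraph V) (hclaw : ClawFree G)
    (c : ZMod 6 → V) (hc : IsInducedCycle G c) (a b x : V)
    (ha : a ∉ Set.range c) (hb : b ∉ Set.range c) (hx : x ∉ Set.range c)
    (haT : {j : ZMod 6 | G.Adj a (c j)} = {1, 2})
    (hbT : {j : ZMod 6 | G.Adj b (c j)} = {3, 4})
    (hxT : {j : ZMod 6 | G.Adj x (c j)} = {5, 0})
    (hab : G.Adj a b) (hax : G.Adj a x) :
    G.Adj b x := by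
  by_contra hbx
  have hmem : ∀ (v : V) (S : Set (ZMod 6)) (_ : {j : ZMod 6 | G.Adj v (c j)} = S)
      (j : ZMod 6), G.Adj v (c j) ↔ j ∈ S := by
    intro v S hS j
    constructor
    · intro h; rw [← hS]; exact h
    · intro h; have : j ∈ {j : ZMod 6 | G.Adj v (c j)} := hS ▸ h; exact this
  have hac1 : G.Adj a (c 1) := (hmem a _ haT 1).2 (by left; rfl)
  have hbc1 : ¬ G.Adj b (c 1) := by
    intro h
    have := (hmem b _ hbT 1).1 h
    simp only [Set.mem_insert_iff, Set.mem_singleton_iff] at this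
    rcases this with h' | h' <;> exact absurd h' (by decide)
  have hxc1 : ¬ G.Adj x (c 1) := by
    intro h
    have := (hmem x _ hxT 1).1 h
    simp only [Set.mem_insert_iff, Set.mem_singleton_iff] at this
    rcases this with h' | h' <;> exact absurd h' (by decide)
  have hbne : b ≠ x := by
    intro h
    have h3 : G.Adj b (c 3) := (hmem b _ hbT 3).2 (by left; rfl)
    rw [h] at h3
    have := (hmem x _ hxT 3).1 h3
    simp only [Set.mem_insert_iff, Set.mem_singleton_iff] at this
    rcases this with h' | h' <;> exact absurd h' (by decide)
  exact hclaw ⟨a, b, x, c 1, hab, hax, hac1, hbx, hbc1, hxc1, hbne,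
    fun h => hb ⟨1, h.symm⟩, fun h => hx ⟨1, h.symm⟩⟩
end

section
/- Let G be a claw-free graph containing an induced 5-cycle H with vertices 1,…,5 (indices mod 5). Then every vertex of G is either on H, or adjacent to exactly 2 consecutive vertices of H, exactly 3 consecutive vertices of H, exactly 4 consecutive vertices of H, all 5 vertices of H, or no vertex of H. In particular, no vertex outside H has a neighborhood on H equal to a single vertex, two nonconsecutive vertices, or three vertices not all consecutive. -/
variable {V : Type*}

lemma combinat : ∀ g : ZMod 5 → Bool,
    (∀ j, g j = true → g (j+1) = true ∨ g (j-1) = true) →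
    (∃ i : ZMod 5, ∀ j, g j = true ↔ (j = i ∨ j = i+1)) ∨
    (∃ i : ZMod 5, ∀ j, g j = true ↔ (j = i ∨ j = i+1 ∨ j = i+2)) ∨
    (∃ i : ZMod 5, ∀ j, g j = true ↔ (j = i ∨ j = i+1 ∨ j = i+2 ∨ j = i+3)) ∨
    (∀ j, g j = true) ∨ (∀ j, ¬ g j = true) := by decide

/-- In a claw-free graph with an induced `C₅`, every vertex is on the cycle, or
sees on the cycle exactly `{i,i+1}`, `{i,i+1,i+2}`, or `{i,i+1,i+2,i+3}` for
some `i`, or all of the cycle, or none of it. -/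
theorem c5_vertex_partition (G : SimpleGraph V) (hclaw : ClawFree G)
    (c : ZMod 5 → V) (hc : IsInducedCycle G c) (v : V) :
    v ∈ Set.range c ∨
    (∃ i : ZMod 5, {j : ZMod 5 | G.Adj v (c j)} = {i, i + 1}) ∨
    (∃ i : ZMod 5, {j : ZMod 5 | G.Adj v (c j)} = {i, i + 1, i + 2}) ∨
    (∃ i : ZMod 5, {j : ZMod 5 | G.Adj v (c j)} = {i, i + 1, i + 2, i + 3}) ∨
    {j : ZMod 5 | G.Adj v (c j)} = Set.univ ∨
    {j : ZMod 5 | G.Adj v (c j)} = ∅ := by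
  classical
  by_cases hv : v ∈ Set.range c
  · exact Or.inl hv
  have hne : ∀ j, v ≠ c j := fun j h => hv ⟨j, h.symm⟩
  have trivia : ∀ j : ZMod 5, ¬(j+1 = j-1+1 ∨ j-1 = j+1+1) ∧ j+1 ≠ j-1 ∧ j = j-1+1 := by
    decide
  have key : ∀ j : ZMod 5, G.Adj v (c j) → G.Adj v (c (j+1)) ∨ G.Adj v (c (j-1)) := by
    intro j hj
    by_contra h
    push_neg at h
    obtain ⟨h1, h2⟩ := h
    apply hclaw
    refine ⟨c j, v, c (j+1), c (j-1), hj.symm,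
      (hc.2 j (j+1)).2 (Or.inr rfl), (hc.2 j (j-1)).2 (Or.inl (trivia j).2.2),
      fun hadj => h1 hadj, fun hadj => h2 hadj,
      fun hadj => (trivia j).1 ((hc.2 _ _).1 hadj),
      hne _, hne _, fun h => (trivia j).2.1 (hc.1 h)⟩
  set g : ZMod 5 → Bool := fun j => decide (G.Adj v (c j)) with hg
  have hgj : ∀ j, g j = true ↔ G.Adj v (c j) := fun j => decide_eq_true_iff
  have key' : ∀ j, g j = true → g (j+1) = true ∨ g (j-1) = true := by
    intro j hj
    rcases key j ((hgj j).1 hj) with h | h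
    · exact Or.inl ((hgj _).2 h)
    · exact Or.inr ((hgj _).2 h)
  rcases combinat g key' with ⟨i, h⟩ | ⟨i, h⟩ | ⟨i, h⟩ | h | h
  · exact Or.inr (Or.inl ⟨i, by
      ext j
      simp only [Set.mem_setOf_eq, Set.mem_insert_iff, Set.mem_singleton_iff, ← hgj, h]⟩)
  · exact Or.inr (Or.inr (Or.inl ⟨i, by
      ext j
      simp only [Set.mem_setOf_eq, Set.mem_insert_iff, Set.mem_singleton_iff, ← hgj, h]⟩))
  · exact Or.inr (Or.inr (Or.inr (Or.inl ⟨i, by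
      ext j
      simp only [Set.mem_setOf_eq, Set.mem_insert_iff, Set.mem_singleton_iff, ← hgj, h]⟩)))
  · refine Or.inr (Or.inr (Or.inr (Or.inr (Or.inl ?_))))
    ext j
    simp only [Set.mem_setOf_eq, Set.mem_univ, iff_true, ← hgj]
    exact h j
  · refine Or.inr (Or.inr (Or.inr (Or.inr (Or.inr ?_))))
    ext j
    simp only [Set.mem_setOf_eq, Set.mem_empty_iff_false, iff_false, ← hgj]
    exact h j
end
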